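/- Divergence (Gauss–Green) theorem for a parametrized surface over a rectangle: let Φ : [0,1]² → ℝ³ be smooth (extending smoothly to a neighborhood) and injective with linearly independent tangents, and let a : ℝ³ → ℝ³ be continuously differentiable. Let γ : [0,4] → ∂([0,1]²) traverse the boundary of the unit square counterclockwise at unit speed (four straight edges). Then ∫_{[0,1]²} (∇_Σ·a^∥)(Φ(u)) √g(u) du = ∫_0^4 a(Φ(γ(s))) · ( (Φ∘γ)'(s) × ν(Φ(γ(s))) ) ds, where a^∥ = a − (a·ν)ν and ∇_Σ·a^∥ = g^{αβ} (∂(a^∥∘Φ)/∂u^α) · τ_β. The right-hand side is the line integral of a against the outward conormal ν_{∂Σ} = τ̂ × ν along the boundary curve of the surface. -/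

import Mathlib

/-!
The fields `F_α = √g (a^∥)^α` (`fluxDensity`) satisfy the Voss–Weyl formula
`∂_α F_α = √g ∇_Σ·a^∥`: differentiating the triple products `a^∥ · (τ₁ × ν)` and `a^∥ · (ν × τ₀)`,
the second derivatives of `Φ` cancel by symmetry, and the terms with `∂ν` vanish because `a^∥`,
`∂ν` and `τ_α` are all orthogonal to `ν`. So the left side is the integral of the planar divergence
of `F` over the square, which Green's theorem turns into the outward flux `∫ (γ₁' F₀ − γ₀' F₁)`
through its boundary. Finally `(Φ∘γ)' = γ₀' τ₀ + γ₁' τ₁`, and the normal part of `a` is orthogonal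
to every `w × ν`, so `a · ((Φ∘γ)' × ν)` is exactly that flux density.
-/

open MeasureTheory ContDiff

noncomputable section

/-- Euclidean dot product on `ℝ³`. -/
def dot3 (a b : Fin 3 → ℝ) : ℝ := ∑ i, a i * b i

/-- Euclidean norm on `ℝ³`. -/
def norm3 (a : Fin 3 → ℝ) : ℝ := Real.sqrt (dot3 a a)

/-- Cross product on `ℝ³`. -/
def cross3 (a b : Fin 3 → ℝ) : Fin 3 → ℝ :=
  ![a 1 * b 2 - a 2 * b 1, a 2 * b 0 - a 0 * b 2, a 0 * b 1 - a 1 * b 0]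

/-- Tangent vector `τ_α = ∂Φ/∂u^α` of a parametrized surface. -/
def tangent (Φ : (Fin 2 → ℝ) → Fin 3 → ℝ) (α : Fin 2) (u : Fin 2 → ℝ) : Fin 3 → ℝ :=
  fderiv ℝ Φ u (Pi.single α 1)

/-- Surface metric tensor `g_{αβ} = τ_α · τ_β`. -/
def metric (Φ : (Fin 2 → ℝ) → Fin 3 → ℝ) (u : Fin 2 → ℝ) : Matrix (Fin 2) (Fin 2) ℝ :=
  Matrix.of fun α β => dot3 (tangent Φ α u) (tangent Φ β u)

/-- Inverse metric tensor `g^{αβ}`. -/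
def metricInv (Φ : (Fin 2 → ℝ) → Fin 3 → ℝ) (u : Fin 2 → ℝ) : Matrix (Fin 2) (Fin 2) ℝ :=
  (metric Φ u)⁻¹

/-- Unit normal `ν = (τ₁ × τ₂)/‖τ₁ × τ₂‖`. -/
def normalVec (Φ : (Fin 2 → ℝ) → Fin 3 → ℝ) (u : Fin 2 → ℝ) : Fin 3 → ℝ :=
  (norm3 (cross3 (tangent Φ 0 u) (tangent Φ 1 u)))⁻¹ •
    cross3 (tangent Φ 0 u) (tangent Φ 1 u)

/-- Second partial derivative `∂²Φ/∂u^α∂u^β`. -/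
def secondDeriv (Φ : (Fin 2 → ℝ) → Fin 3 → ℝ) (α β : Fin 2) (u : Fin 2 → ℝ) : Fin 3 → ℝ :=
  fderiv ℝ (tangent Φ β) u (Pi.single α 1)

/-- Curvature tensor `b_{αβ} = (∂²Φ/∂u^α∂u^β) · ν`. -/
def curvTensor (Φ : (Fin 2 → ℝ) → Fin 3 → ℝ) (α β : Fin 2) (u : Fin 2 → ℝ) : ℝ :=
  dot3 (secondDeriv Φ α β u) (normalVec Φ u)

/-- Mean curvature `κ_M = (1/2) g^{αβ} b_{αβ}`. -/
def meanCurv (Φ : (Fin 2 → ℝ) → Fin 3 → ℝ) (u : Fin 2 → ℝ) : ℝ :=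
  (1/2) * ∑ α, ∑ β, metricInv Φ u α β * curvTensor Φ α β u

/-- Tangential part `a^∥ = a − (a·ν)ν` of an ambient vector field, as a
function of the surface parameter. -/
def tangPart (Φ : (Fin 2 → ℝ) → Fin 3 → ℝ) (a : (Fin 3 → ℝ) → Fin 3 → ℝ) (u : Fin 2 → ℝ) :
    Fin 3 → ℝ :=
  a (Φ u) - dot3 (a (Φ u)) (normalVec Φ u) • normalVec Φ u

/-- Coordinate surface divergence `∇_Σ·b = g^{αβ} (∂b/∂u^α)·τ_β` of a vector field
defined along the surface. -/
def coordSurfDiv (Φ : (Fin 2 → ℝ) → Fin 3 → ℝ) (b : (Fin 2 → ℝ) → Fin 3 → ℝ)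
    (u : Fin 2 → ℝ) : ℝ :=
  ∑ α, ∑ β, metricInv Φ u α β * dot3 (fderiv ℝ b u (Pi.single α 1)) (tangent Φ β u)

/-- The counterclockwise unit-speed boundary curve of the unit square `[0,1]²`,
parametrized over `[0,4]`, consisting of the four straight edges. -/
def squareBoundary (s : ℝ) : Fin 2 → ℝ :=
  if s ≤ 1 then ![s, 0]
  else if s ≤ 2 then ![1, s - 1]
  else if s ≤ 3 then ![3 - s, 1]
  else ![0, 4 - s]

/-- The closed unit square `[0,1]²` as a subset of `ℝ²`. -/
def unitSquare : Set (Fin 2 → ℝ) := Set.pi Set.univ fun _ => Set.Icc (0:ℝ) 1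

open Matrix Set Filter Topology MeasureTheory intervalIntegral

section Calculus

variable {E : Type*} [NormedAddCommGroup E] [NormedSpace ℝ E]
  {f g : E → Fin 3 → ℝ} {x v : E} {n : WithTop ℕ∞}

lemma ContDiffAt.dotProduct (hf : ContDiffAt ℝ n f x) (hg : ContDiffAt ℝ n g x) :
    ContDiffAt ℝ n (fun y => f y ⬝ᵥ g y) x :=
  show ContDiffAt ℝ n (fun y => (dotProductBilin ℝ ℝ).toContinuousBilinearMap (f y) (g y)) x from
    ((ContinuousLinearMap.contDiff _).contDiffAt.comp x hf).clm_apply hg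

lemma ContDiffAt.crossProduct (hf : ContDiffAt ℝ n f x) (hg : ContDiffAt ℝ n g x) :
    ContDiffAt ℝ n (fun y => f y ⨯₃ g y) x :=
  show ContDiffAt ℝ n
      (fun y => (_root_.crossProduct (R := ℝ)).toContinuousBilinearMap (f y) (g y)) x from
    ((ContinuousLinearMap.contDiff _).contDiffAt.comp x hf).clm_apply hg

lemma DifferentiableAt.crossProduct (hf : DifferentiableAt ℝ f x) (hg : DifferentiableAt ℝ g x) :
    DifferentiableAt ℝ (fun y => f y ⨯₃ g y) x :=
  ((_root_.crossProduct (R := ℝ)).toContinuousBilinearMap.hasFDerivAt_of_bilinear hf.hasFDerivAt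
    hg.hasFDerivAt).differentiableAt

lemma fderiv_dotProduct_apply (hf : DifferentiableAt ℝ f x) (hg : DifferentiableAt ℝ g x) :
    fderiv ℝ (fun y => f y ⬝ᵥ g y) x v = fderiv ℝ f x v ⬝ᵥ g x + f x ⬝ᵥ fderiv ℝ g x v := by
  have h : HasFDerivAt (fun y => f y ⬝ᵥ g y) _ x :=
    (dotProductBilin ℝ ℝ : (Fin 3 → ℝ) →ₗ[ℝ] _ →ₗ[ℝ] ℝ).toContinuousBilinearMap
      |>.hasFDerivAt_of_bilinear hf.hasFDerivAt hg.hasFDerivAt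
  simp [h.fderiv, add_comm]

lemma fderiv_crossProduct_apply (hf : DifferentiableAt ℝ f x) (hg : DifferentiableAt ℝ g x) :
    fderiv ℝ (fun y => f y ⨯₃ g y) x v = fderiv ℝ f x v ⨯₃ g x + f x ⨯₃ fderiv ℝ g x v := by
  have h : HasFDerivAt (fun y => f y ⨯₃ g y) _ x :=
    (crossProduct (R := ℝ)).toContinuousBilinearMap.hasFDerivAt_of_bilinear hf.hasFDerivAt
      hg.hasFDerivAt
  simp [h.fderiv, add_comm]

end Calculus

lemma dot3_eq_dotProduct (x y : Fin 3 → ℝ) : dot3 x y = x ⬝ᵥ y := rfl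

lemma cross3_eq_crossProduct (x y : Fin 3 → ℝ) : cross3 x y = x ⨯₃ y := rfl

lemma dotProduct_self_pos {ι : Type*} [Fintype ι] {v : ι → ℝ} (hv : v ≠ 0) : 0 < v ⬝ᵥ v :=
  (Fintype.sum_nonneg fun _ => mul_self_nonneg _).lt_of_ne' (dotProduct_self_eq_zero.not.2 hv)

lemma triple_product_mul_dotProduct_self (x y z ν : Fin 3 → ℝ) :
    (x ⬝ᵥ y ⨯₃ z) * (ν ⬝ᵥ ν) =
      (x ⬝ᵥ ν) * (ν ⬝ᵥ y ⨯₃ z) + (y ⬝ᵥ ν) * (ν ⬝ᵥ z ⨯₃ x) + (z ⬝ᵥ ν) * (ν ⬝ᵥ x ⨯₃ y) := by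
  simp [cross_apply, dotProduct, Fin.sum_univ_three]
  ring

lemma triple_product_eq_zero_of_orthogonal {x y z ν : Fin 3 → ℝ} (hν : ν ≠ 0)
    (hx : x ⬝ᵥ ν = 0) (hy : y ⬝ᵥ ν = 0) (hz : z ⬝ᵥ ν = 0) : x ⬝ᵥ y ⨯₃ z = 0 := by
  have h := triple_product_mul_dotProduct_self x y z ν
  rw [hx, hy, hz] at h
  simpa [hν] using h

/-- `fluxDensity Φ b α = √g g^{αβ} (b · τ_β)`, written through `τ₁ × ν = √g g^{0β} τ_β` and
`ν × τ₀ = √g g^{1β} τ_β`. -/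
def fluxDensity (Φ b : (Fin 2 → ℝ) → Fin 3 → ℝ) : Fin 2 → (Fin 2 → ℝ) → ℝ :=
  ![fun u => b u ⬝ᵥ tangent Φ 1 u ⨯₃ normalVec Φ u,
    fun u => b u ⬝ᵥ normalVec Φ u ⨯₃ tangent Φ 0 u]

section Surface

variable {Φ b : (Fin 2 → ℝ) → Fin 3 → ℝ} {a : (Fin 3 → ℝ) → Fin 3 → ℝ} {u : Fin 2 → ℝ}

local notation "τ" => tangent Φ
local notation "ν" => normalVec Φ
local notation "N" => fun u => tangent Φ 0 u ⨯₃ tangent Φ 1 u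

lemma normalVec_eq : ν u = (√(N u ⬝ᵥ N u))⁻¹ • N u := rfl

lemma det_metric : (metric Φ u).det = N u ⬝ᵥ N u := by
  simp [det_fin_two, metric, cross_dot_cross, dot3_eq_dotProduct, dotProduct_comm (τ 1 u)]

lemma metricInv_eq : metricInv Φ u =
    (N u ⬝ᵥ N u)⁻¹ • !![τ 1 u ⬝ᵥ τ 1 u, -(τ 0 u ⬝ᵥ τ 1 u); -(τ 1 u ⬝ᵥ τ 0 u), τ 0 u ⬝ᵥ τ 0 u] := by
  rw [metricInv, inv_def, adjugate_fin_two, det_metric, Ring.inverse_eq_inv']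
  rfl

lemma tangent_dotProduct_normalVec (α : Fin 2) : τ α u ⬝ᵥ ν u = 0 := by
  fin_cases α <;> simp [normalVec_eq, dot_self_cross, dot_cross_self]

lemma normalVec_dotProduct_self (hu : N u ≠ 0) : ν u ⬝ᵥ ν u = 1 := by
  have hpos := dotProduct_self_pos hu
  rw [normalVec_eq, smul_dotProduct, dotProduct_smul, smul_eq_mul, smul_eq_mul, ← mul_assoc,
    ← mul_inv, Real.mul_self_sqrt hpos.le, inv_mul_cancel₀ hpos.ne']

lemma tangent_one_cross_normalVec :
    τ 1 u ⨯₃ ν u = √(metric Φ u).det • ∑ β, metricInv Φ u 0 β • τ β u := by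
  rw [normalVec_eq, metricInv_eq, det_metric, map_smul, cross_cross_eq_smul_sub_smul']
  ext i
  simp [Fin.sum_univ_two, ← Real.sqrt_div_self]
  ring

lemma normalVec_cross_tangent_zero :
    ν u ⨯₃ τ 0 u = √(metric Φ u).det • ∑ β, metricInv Φ u 1 β • τ β u := by
  rw [normalVec_eq, metricInv_eq, det_metric, map_smul, LinearMap.smul_apply,
    cross_cross_eq_smul_sub_smul]
  ext i
  simp [Fin.sum_univ_two, ← Real.sqrt_div_self]
  ring

lemma fderiv_apply_eq_tangent (v : Fin 2 → ℝ) : fderiv ℝ Φ u v = v 0 • τ 0 u + v 1 • τ 1 u := by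
  have hv : v = v 0 • Pi.single 0 1 + v 1 • Pi.single 1 1 := by ext i; fin_cases i <;> simp
  conv_lhs => rw [hv]
  simp [tangent]

lemma tangPart_dotProduct_normalVec (hu : N u ≠ 0) : tangPart Φ a u ⬝ᵥ ν u = 0 := by
  simp [tangPart, dot3_eq_dotProduct, normalVec_dotProduct_self hu]

lemma dotProduct_fderiv_cross_normalVec (v : Fin 2 → ℝ) :
    a (Φ u) ⬝ᵥ fderiv ℝ Φ u v ⨯₃ ν u =
      v 1 * fluxDensity Φ (tangPart Φ a) 0 u - v 0 * fluxDensity Φ (tangPart Φ a) 1 u := by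
  simp [fderiv_apply_eq_tangent, fluxDensity, tangPart, cross_apply, dotProduct,
    Fin.sum_univ_three]
  ring

lemma contDiff_tangent (hΦ : ContDiff ℝ 2 Φ) (α : Fin 2) : ContDiff ℝ 1 (τ α) :=
  (hΦ.fderiv_right le_rfl).clm_apply contDiff_const

lemma contDiffAt_tangent_cross_tangent (hΦ : ContDiff ℝ 2 Φ) : ContDiffAt ℝ 1 N u :=
  (contDiff_tangent hΦ 0).contDiffAt.crossProduct (contDiff_tangent hΦ 1).contDiffAt

lemma contDiffAt_normalVec (hΦ : ContDiff ℝ 2 Φ) (hu : N u ≠ 0) : ContDiffAt ℝ 1 ν u := by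
  have hN := contDiffAt_tangent_cross_tangent hΦ (u := u)
  have hpos := dotProduct_self_pos hu
  exact ((hN.dotProduct hN).sqrt hpos.ne').inv (Real.sqrt_pos.2 hpos).ne' |>.smul hN

lemma contDiffAt_tangPart (hΦ : ContDiff ℝ 2 Φ) (ha : ContDiff ℝ 1 a) (hu : N u ≠ 0) :
    ContDiffAt ℝ 1 (tangPart Φ a) u := by
  have haΦ : ContDiffAt ℝ 1 (fun w => a (Φ w)) u :=
    ha.contDiffAt.comp u (hΦ.of_le (by norm_num)).contDiffAt
  have hν := contDiffAt_normalVec hΦ hu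
  exact haΦ.sub ((haΦ.dotProduct hν).smul hν)

lemma contDiffAt_fluxDensity (hΦ : ContDiff ℝ 2 Φ) (hb : ContDiffAt ℝ 1 b u) (hu : N u ≠ 0)
    (α : Fin 2) : ContDiffAt ℝ 1 (fluxDensity Φ b α) u := by
  have hτ := fun β => (contDiff_tangent hΦ β).contDiffAt (x := u)
  have hν := contDiffAt_normalVec hΦ hu
  fin_cases α
  · exact hb.dotProduct ((hτ 1).crossProduct hν)
  · exact hb.dotProduct (hν.crossProduct (hτ 0))

lemma fderiv_normalVec_dotProduct_normalVec (hΦ : ContDiff ℝ 2 Φ) (hu : N u ≠ 0)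
    (v : Fin 2 → ℝ) : fderiv ℝ ν u v ⬝ᵥ ν u = 0 := by
  have hν := (contDiffAt_normalVec hΦ hu).differentiableAt one_ne_zero
  have hunit : (fun w => ν w ⬝ᵥ ν w) =ᶠ[𝓝 u] fun _ => 1 := by
    filter_upwards [(contDiffAt_tangent_cross_tangent hΦ).continuousAt.eventually_ne hu]
      with w hw using normalVec_dotProduct_self hw
  have h := fderiv_dotProduct_apply (v := v) hν hν
  rw [hunit.fderiv_eq, fderiv_const_apply, dotProduct_comm (ν u)] at h
  simp at h
  linarith

lemma fderiv_tangent_comm (hΦ : ContDiff ℝ 2 Φ) (α β : Fin 2) :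
    fderiv ℝ (τ β) u (Pi.single α 1) = fderiv ℝ (τ α) u (Pi.single β 1) := by
  have hdΦ : DifferentiableAt ℝ (fderiv ℝ Φ) u :=
    (hΦ.fderiv_right le_rfl).differentiable one_ne_zero u
  have key : ∀ γ δ : Fin 2, fderiv ℝ (τ δ) u (Pi.single γ 1)
      = fderiv ℝ (fderiv ℝ Φ) u (Pi.single γ 1) (Pi.single δ 1) := fun γ δ => by
    change fderiv ℝ (fun w => fderiv ℝ Φ w (Pi.single δ 1)) u _ = _
    simp [fderiv_clm_apply hdΦ (differentiableAt_const _)]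
  rw [key, key, hΦ.contDiffAt.isSymmSndFDerivAt (by simp)]

lemma sum_fderiv_fluxDensity (hΦ : ContDiff ℝ 2 Φ) (hb : DifferentiableAt ℝ b u)
    (hbν : b u ⬝ᵥ ν u = 0) (hu : N u ≠ 0) :
    ∑ α, fderiv ℝ (fluxDensity Φ b α) u (Pi.single α 1) =
      coordSurfDiv Φ b u * √(metric Φ u).det := by
  have hτ := fun β => (contDiff_tangent hΦ β).differentiable one_ne_zero u
  have hν := (contDiffAt_normalVec hΦ hu).differentiableAt one_ne_zero
  have hν0 : ν u ≠ 0 := fun h => by simpa [h] using normalVec_dotProduct_self hu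
  have horth : ∀ v, fderiv ℝ ν u v ⬝ᵥ ν u = 0 := fderiv_normalVec_dotProduct_normalVec hΦ hu
  have h₀ : b u ⬝ᵥ τ 1 u ⨯₃ fderiv ℝ ν u (Pi.single 0 1) = 0 :=
    triple_product_eq_zero_of_orthogonal hν0 hbν (tangent_dotProduct_normalVec 1) (horth _)
  have h₁ : b u ⬝ᵥ fderiv ℝ ν u (Pi.single 1 1) ⨯₃ τ 0 u = 0 :=
    triple_product_eq_zero_of_orthogonal hν0 hbν (horth _) (tangent_dotProduct_normalVec 0)
  simp only [Fin.sum_univ_two, fluxDensity, cons_val_zero, cons_val_one]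
  rw [fderiv_dotProduct_apply hb ((hτ 1).crossProduct hν), fderiv_crossProduct_apply (hτ 1) hν,
    fderiv_dotProduct_apply hb (hν.crossProduct (hτ 0)), fderiv_crossProduct_apply hν (hτ 0),
    fderiv_tangent_comm hΦ 0 1, tangent_one_cross_normalVec, normalVec_cross_tangent_zero]
  simp only [dotProduct_add, h₀, h₁, ← cross_anticomm (fderiv ℝ (τ 0) u _), dotProduct_neg,
    dotProduct_smul, coordSurfDiv, dot3_eq_dotProduct, Fin.sum_univ_two]
  ring

end Surface

section SquareBoundary

variable {s : ℝ}

lemma hasDerivAt_vecCons₂ {f g : ℝ → ℝ} {f' g' : ℝ} (hf : HasDerivAt f f' s)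
    (hg : HasDerivAt g g' s) : HasDerivAt (fun r => ![f r, g r]) ![f', g'] s :=
  hasDerivAt_pi.2 (Fin.forall_fin_two.2 ⟨hf, hg⟩)

lemma squareBoundary_of_le_one (hs : s ≤ 1) : squareBoundary s = ![s, 0] := by
  simp [squareBoundary, hs]

lemma squareBoundary_of_one_lt_of_le_two (h₁ : 1 < s) (h₂ : s ≤ 2) :
    squareBoundary s = ![1, s - 1] := by
  simp [squareBoundary, h₁.not_ge, h₂]

lemma squareBoundary_of_two_lt_of_le_three (h₂ : 2 < s) (h₃ : s ≤ 3) :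
    squareBoundary s = ![3 - s, 1] := by
  simp [squareBoundary, h₂.not_ge, h₃, (one_lt_two.trans h₂).not_ge]

lemma squareBoundary_of_three_lt (h₃ : 3 < s) : squareBoundary s = ![0, 4 - s] := by
  simp [squareBoundary, h₃.not_ge, (by linarith : ¬ s ≤ 1), (by linarith : ¬ s ≤ 2)]

lemma hasDerivAt_squareBoundary_of_lt_one (hs : s < 1) :
    HasDerivAt squareBoundary ![1, 0] s :=
  (hasDerivAt_vecCons₂ (hasDerivAt_id s) (hasDerivAt_const s 0)).congr_of_eventuallyEq <| by
    filter_upwards [eventually_lt_nhds hs] with r hr using squareBoundary_of_le_one hr.le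

lemma hasDerivAt_squareBoundary_of_one_lt_of_lt_two (h₁ : 1 < s) (h₂ : s < 2) :
    HasDerivAt squareBoundary ![0, 1] s :=
  (hasDerivAt_vecCons₂ (hasDerivAt_const s 1) ((hasDerivAt_id s).sub_const 1)).congr_of_eventuallyEq
    <| by filter_upwards [Ioo_mem_nhds h₁ h₂] with r hr
            using squareBoundary_of_one_lt_of_le_two hr.1 hr.2.le

lemma hasDerivAt_squareBoundary_of_two_lt_of_lt_three (h₂ : 2 < s) (h₃ : s < 3) :
    HasDerivAt squareBoundary ![-1, 0] s := by
  refine (hasDerivAt_vecCons₂ ((hasDerivAt_id s).const_sub 3) (hasDerivAt_const s 1))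
    |>.congr_of_eventuallyEq ?_
  filter_upwards [Ioo_mem_nhds h₂ h₃] with r hr
    using squareBoundary_of_two_lt_of_le_three hr.1 hr.2.le

lemma hasDerivAt_squareBoundary_of_three_lt (h₃ : 3 < s) :
    HasDerivAt squareBoundary ![0, -1] s := by
  refine (hasDerivAt_vecCons₂ (hasDerivAt_const s 0) ((hasDerivAt_id s).const_sub 4))
    |>.congr_of_eventuallyEq ?_
  filter_upwards [eventually_gt_nhds h₃] with r hr using squareBoundary_of_three_lt hr

lemma differentiableAt_squareBoundary (hs : s ∉ ({1, 2, 3} : Set ℝ)) :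
    DifferentiableAt ℝ squareBoundary s := by
  simp only [mem_insert_iff, mem_singleton_iff, not_or] at hs
  obtain ⟨h₁, h₂, h₃⟩ := hs
  rcases Ne.lt_or_gt h₁ with h₁ | h₁
  · exact (hasDerivAt_squareBoundary_of_lt_one h₁).differentiableAt
  rcases Ne.lt_or_gt h₂ with h₂ | h₂
  · exact (hasDerivAt_squareBoundary_of_one_lt_of_lt_two h₁ h₂).differentiableAt
  rcases Ne.lt_or_gt h₃ with h₃ | h₃
  · exact (hasDerivAt_squareBoundary_of_two_lt_of_lt_three h₂ h₃).differentiableAt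
  · exact (hasDerivAt_squareBoundary_of_three_lt h₃).differentiableAt

end SquareBoundary

lemma ContinuousOn.intervalIntegrable_of_eqOn_Ioo {f g : ℝ → ℝ} {a b : ℝ} (hab : a ≤ b)
    (hg : ContinuousOn g (Icc a b)) (h : EqOn f g (Ioo a b)) :
    IntervalIntegrable f volume a b :=
  (uIcc_of_le hab ▸ hg).intervalIntegrable.congr_uIoo (uIoo_of_le hab ▸ h.symm)

lemma vecCons₂_mem_unitSquare {x y : ℝ} (hx : x ∈ Icc 0 1) (hy : y ∈ Icc 0 1) :
    ![x, y] ∈ unitSquare := fun i _ => by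
  fin_cases i
  exacts [hx, hy]

lemma integral_squareBoundary_flux {F : Fin 2 → (Fin 2 → ℝ) → ℝ}
    (hF : ∀ i, ContinuousOn (F i) unitSquare) :
    ∫ s in (0 : ℝ)..4, (deriv squareBoundary s 1 * F 0 (squareBoundary s) -
        deriv squareBoundary s 0 * F 1 (squareBoundary s)) =
      (∫ t in (0 : ℝ)..1, F 0 ![1, t]) - (∫ t in (0 : ℝ)..1, F 0 ![0, t]) +
        ((∫ t in (0 : ℝ)..1, F 1 ![t, 1]) - ∫ t in (0 : ℝ)..1, F 1 ![t, 0]) := by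
  set h := fun s => deriv squareBoundary s 1 * F 0 (squareBoundary s) -
    deriv squareBoundary s 0 * F 1 (squareBoundary s)
  have e₁ : EqOn h (fun s => -F 1 ![s, 0]) (Ioo 0 1) := fun s hs => by
    simp [h, (hasDerivAt_squareBoundary_of_lt_one hs.2).deriv, squareBoundary_of_le_one hs.2.le]
  have e₂ : EqOn h (fun s => F 0 ![1, s - 1]) (Ioo 1 2) := fun s hs => by
    simp [h, (hasDerivAt_squareBoundary_of_one_lt_of_lt_two hs.1 hs.2).deriv,
      squareBoundary_of_one_lt_of_le_two hs.1 hs.2.le]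
  have e₃ : EqOn h (fun s => F 1 ![3 - s, 1]) (Ioo 2 3) := fun s hs => by
    simp [h, (hasDerivAt_squareBoundary_of_two_lt_of_lt_three hs.1 hs.2).deriv,
      squareBoundary_of_two_lt_of_le_three hs.1 hs.2.le]
  have e₄ : EqOn h (fun s => -F 0 ![0, 4 - s]) (Ioo 3 4) := fun s hs => by
    simp [h, (hasDerivAt_squareBoundary_of_three_lt hs.1).deriv, squareBoundary_of_three_lt hs.1]
  have c₁ : ContinuousOn (fun s => -F 1 ![s, 0]) (Icc 0 1) :=
    ((hF 1).comp (by fun_prop) fun s hs => vecCons₂_mem_unitSquare hs ⟨le_rfl, zero_le_one⟩).neg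
  have c₂ : ContinuousOn (fun s => F 0 ![1, s - 1]) (Icc 1 2) :=
    (hF 0).comp (by fun_prop) fun s hs =>
      vecCons₂_mem_unitSquare ⟨zero_le_one, le_rfl⟩ ⟨by linarith [hs.1], by linarith [hs.2]⟩
  have c₃ : ContinuousOn (fun s => F 1 ![3 - s, 1]) (Icc 2 3) :=
    (hF 1).comp (by fun_prop) fun s hs =>
      vecCons₂_mem_unitSquare ⟨by linarith [hs.2], by linarith [hs.1]⟩ ⟨zero_le_one, le_rfl⟩
  have c₄ : ContinuousOn (fun s => -F 0 ![0, 4 - s]) (Icc 3 4) :=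
    ((hF 0).comp (by fun_prop) fun s hs =>
      vecCons₂_mem_unitSquare ⟨le_rfl, zero_le_one⟩ ⟨by linarith [hs.2], by linarith [hs.1]⟩).neg
  have i₁ := c₁.intervalIntegrable_of_eqOn_Ioo zero_le_one e₁
  have i₂ := c₂.intervalIntegrable_of_eqOn_Ioo one_le_two e₂
  have i₃ := c₃.intervalIntegrable_of_eqOn_Ioo (by norm_num) e₃
  have i₄ := c₄.intervalIntegrable_of_eqOn_Ioo (by norm_num) e₄
  rw [← integral_add_adjacent_intervals i₁ (i₂.trans (i₃.trans i₄)),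
    ← integral_add_adjacent_intervals i₂ (i₃.trans i₄), ← integral_add_adjacent_intervals i₃ i₄,
    integral_congr_Ioo_of_le zero_le_one e₁, integral_congr_Ioo_of_le one_le_two e₂,
    integral_congr_Ioo_of_le (by norm_num) e₃, integral_congr_Ioo_of_le (by norm_num) e₄,
    intervalIntegral.integral_neg, intervalIntegral.integral_neg,
    integral_comp_sub_right (fun t => F 0 ![1, t]), integral_comp_sub_left (fun t => F 1 ![t, 1]),
    integral_comp_sub_left (fun t => F 0 ![0, t])]
  norm_num
  ring

lemma setIntegral_Icc_fin_one {E : Type*} [NormedAddCommGroup E] [NormedSpace ℝ E]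
    (g : (Fin 1 → ℝ) → E) {a b : ℝ} (hab : a ≤ b) :
    ∫ x in Icc (fun _ => a) (fun _ => b), g x = ∫ t in a..b, g fun _ => t := by
  have hpre : (MeasurableEquiv.funUnique (Fin 1) ℝ).symm ⁻¹' Icc (fun _ => a) (fun _ => b) =
      Icc a b :=
    (OrderIso.funUnique (Fin 1) ℝ).symm.preimage_Icc _ _
  rw [integral_of_le hab, setIntegral_congr_set Ioc_ae_eq_Icc, ← hpre]
  exact (((volume_preserving_funUnique (Fin 1) ℝ).symm _).setIntegral_preimage_emb
    (MeasurableEquiv.measurableEmbedding _) g _).symm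

lemma integral_unitSquare_sum_fderiv {F : Fin 2 → (Fin 2 → ℝ) → ℝ}
    (hF : ∀ i, ∀ u ∈ unitSquare, ContDiffAt ℝ 1 (F i) u) :
    ∫ u in unitSquare, ∑ i, fderiv ℝ (F i) u (Pi.single i 1) =
      (∫ t in (0 : ℝ)..1, F 0 ![1, t]) - (∫ t in (0 : ℝ)..1, F 0 ![0, t]) +
        ((∫ t in (0 : ℝ)..1, F 1 ![t, 1]) - ∫ t in (0 : ℝ)..1, F 1 ![t, 0]) := by
  have hdiv : ContinuousOn (fun u => ∑ i, fderiv ℝ (F i) u (Pi.single i 1)) unitSquare :=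
    continuousOn_finsetSum _ fun i _ u hu =>
      (((hF i u hu).fderiv_right (m := 0) le_rfl).continuousAt.clm_apply
        continuousAt_const).continuousWithinAt
  have hint : (pi univ fun _ => Ioo 0 1) ⊆ unitSquare := pi_mono fun _ _ => Ioo_subset_Icc_self
  rw [unitSquare, pi_univ_Icc] at hF hdiv hint ⊢
  rw [integral_divergence_of_hasFDerivAt_off_countable' (fun _ => 0) (fun _ => 1)
    (fun _ => zero_le_one) F (fun i u => fderiv ℝ (F i) u) ∅ countable_empty
    (fun i u hu => (hF i u hu).continuousAt.continuousWithinAt)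
    (fun u hu i => ((hF i u (hint hu.1)).differentiableAt one_ne_zero).hasFDerivAt)
    (hdiv.integrableOn_compact isCompact_Icc)]
  have h₀ : ∀ c t : ℝ, Fin.insertNth 0 c (fun _ : Fin 1 => t) = ![c, t] := fun c t => by
    ext j; fin_cases j <;> rfl
  have h₁ : ∀ c t : ℝ, Fin.insertNth 1 c (fun _ : Fin 1 => t) = ![t, c] := fun c t => by
    ext j; fin_cases j <;> rfl
  rw [Fin.sum_univ_two]
  simp only [Function.comp_def]
  rw [setIntegral_Icc_fin_one _ zero_le_one, setIntegral_Icc_fin_one _ zero_le_one,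
    setIntegral_Icc_fin_one _ zero_le_one, setIntegral_Icc_fin_one _ zero_le_one]
  simp only [h₀, h₁]

theorem integral_unitSquare_sum_fderiv_eq_boundary_flux {F : Fin 2 → (Fin 2 → ℝ) → ℝ}
    (hF : ∀ i, ∀ u ∈ unitSquare, ContDiffAt ℝ 1 (F i) u) :
    ∫ u in unitSquare, ∑ i, fderiv ℝ (F i) u (Pi.single i 1) =
      ∫ s in (0 : ℝ)..4, (deriv squareBoundary s 1 * F 0 (squareBoundary s) -
        deriv squareBoundary s 0 * F 1 (squareBoundary s)) := by
  rw [integral_unitSquare_sum_fderiv hF, integral_squareBoundary_flux fun i u hu =>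
    (hF i u hu).continuousAt.continuousWithinAt]

theorem surface_divergence_theorem_unit_square_general
    (Φ : (Fin 2 → ℝ) → Fin 3 → ℝ)
    (hΦ : ContDiff ℝ ∞ Φ)
    (hindep : ∀ u ∈ unitSquare, LinearIndependent ℝ ![tangent Φ 0 u, tangent Φ 1 u])
    (a : (Fin 3 → ℝ) → Fin 3 → ℝ) (ha : ContDiff ℝ 1 a) :
    ∫ u in unitSquare,
        coordSurfDiv Φ (tangPart Φ a) u * Real.sqrt ((metric Φ u).det)
      = ∫ s in (0:ℝ)..4,
          dot3 (a (Φ (squareBoundary s)))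
            (cross3 (deriv (fun r => Φ (squareBoundary r)) s)
              (normalVec Φ (squareBoundary s))) := by
  have hΦ₂ : ContDiff ℝ 2 Φ := contDiff_infty.1 hΦ 2
  have hN : ∀ u ∈ unitSquare, tangent Φ 0 u ⨯₃ tangent Φ 1 u ≠ 0 := fun u hu =>
    crossProduct_ne_zero_iff_linearIndependent.2 (hindep u hu)
  have hcorners : ∀ᵐ s, s ∉ ({1, 2, 3} : Set ℝ) := (toFinite _).countable.ae_notMem volume
  calc _ = ∫ u in unitSquare, ∑ i, fderiv ℝ (fluxDensity Φ (tangPart Φ a) i) u (Pi.single i 1) :=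
        setIntegral_congr_fun (MeasurableSet.univ_pi fun _ => measurableSet_Icc) fun u hu =>
          (sum_fderiv_fluxDensity hΦ₂
            ((contDiffAt_tangPart hΦ₂ ha (hN u hu)).differentiableAt one_ne_zero)
            (tangPart_dotProduct_normalVec (hN u hu)) (hN u hu)).symm
    _ = _ := integral_unitSquare_sum_fderiv_eq_boundary_flux fun i u hu =>
        contDiffAt_fluxDensity hΦ₂ (contDiffAt_tangPart hΦ₂ ha (hN u hu)) (hN u hu) i
    _ = _ := integral_congr_ae <| by
      filter_upwards [hcorners] with s hs _
      rw [show (fun r => Φ (squareBoundary r)) = Φ ∘ squareBoundary from rfl,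
        fderiv_comp_deriv s (hΦ.differentiable (by simp) _) (differentiableAt_squareBoundary hs),
        dot3_eq_dotProduct, cross3_eq_crossProduct, dotProduct_fderiv_cross_normalVec]

/-- **Divergence (Gauss–Green) theorem for a parametrized surface over a rectangle:**
`∫_{[0,1]²} (∇_Σ·a^∥)(Φ(u)) √g du = ∫_0^4 a(Φ(γ(s))) · ((Φ∘γ)'(s) × ν(γ(s))) ds`. -/
theorem surface_divergence_theorem_unit_square
    (Φ : (Fin 2 → ℝ) → Fin 3 → ℝ)
    (hΦ : ContDiff ℝ ∞ Φ)
    (hΦinj : Set.InjOn Φ unitSquare)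
    (hindep : ∀ u ∈ unitSquare, LinearIndependent ℝ ![tangent Φ 0 u, tangent Φ 1 u])
    (a : (Fin 3 → ℝ) → Fin 3 → ℝ) (ha : ContDiff ℝ 1 a) :
    ∫ u in unitSquare,
        coordSurfDiv Φ (tangPart Φ a) u * Real.sqrt ((metric Φ u).det)
      = ∫ s in (0:ℝ)..4,
          dot3 (a (Φ (squareBoundary s)))
            (cross3 (deriv (fun r => Φ (squareBoundary r)) s)
              (normalVec Φ (squareBoundary s))) :=
  surface_divergence_theorem_unit_square_general Φ hΦ hindep a ha
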